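/- arXiv:0805.1859 — 4 statements merged into one kernel-verified Lean document; each statement's English description precedes it below -/
import Mathlib

section
/- Let G be a finite directed graph that contains exactly one vertex of indegree 0 and outdegree 2, exactly k ≥ 1 vertices of indegree 2 and outdegree at most 1 (reticulation vertices), and in which every remaining vertex has indegree 1 and outdegree 2 (split vertices). Then the number of split vertices is at most 2k−2, so G has at most 3k−1 vertices, and G has at most (9k−3)/2 arcs. -/
/-!
Common definitions for formalizing "Constructing the Simplest Possible
Phylogenetic Network from Triplets" (van Iersel, Kelk).

A directed graph on a vertex type `V` is given by its arc set `A : Set (V × V)`.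
-/

namespace Phylo

variable {V L : Type}

/-- In-degree of a vertex. -/
noncomputable def indeg (A : Set (V × V)) (v : V) : ℕ := {u | (u, v) ∈ A}.ncard

/-- Out-degree of a vertex. -/
noncomputable def outdeg (A : Set (V × V)) (v : V) : ℕ := {w | (v, w) ∈ A}.ncard

/-- The root: indegree 0 and outdegree 2. -/
def IsRoot (A : Set (V × V)) (v : V) : Prop := indeg A v = 0 ∧ outdeg A v = 2

/-- A split vertex: indegree 1 and outdegree 2. -/
def IsSplit (A : Set (V × V)) (v : V) : Prop := indeg A v = 1 ∧ outdeg A v = 2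

/-- A reticulation vertex: indegree 2 and outdegree 1. -/
def IsRetic (A : Set (V × V)) (v : V) : Prop := indeg A v = 2 ∧ outdeg A v = 1

/-- A leaf vertex: indegree 1 and outdegree 0. -/
def IsLeafV (A : Set (V × V)) (v : V) : Prop := indeg A v = 1 ∧ outdeg A v = 0

/-- Directed reachability (reflexive-transitive closure of the arc relation). -/
def Reaches (A : Set (V × V)) : V → V → Prop :=
  Relation.ReflTransGen fun u v => (u, v) ∈ A

/-- A directed graph is acyclic if it has no directed cycle. -/
def Acyclic (A : Set (V × V)) : Prop := ∀ u v, (u, v) ∈ A → ¬ Reaches A v u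

/-- Adjacency in the underlying undirected graph. -/
def UAdj (A : Set (V × V)) (u v : V) : Prop := (u, v) ∈ A ∨ (v, u) ∈ A

/-- The underlying undirected graph is connected (on all of `V`). -/
def ConnectedGraph (A : Set (V × V)) : Prop :=
  ∀ u v : V, Relation.ReflTransGen (UAdj A) u v

/-- Undirected connectivity within a set `S` of vertices (in the induced subgraph). -/
def ConnWithin (A : Set (V × V)) (S : Set V) : Prop :=
  ∀ u ∈ S, ∀ v ∈ S, Relation.ReflTransGen (fun a b => a ∈ S ∧ b ∈ S ∧ UAdj A a b) u v

/-- A set of at least two vertices inducing a biconnected subgraph: it is connected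
and stays connected after removal of any single vertex. -/
def Biconnected (A : Set (V × V)) (S : Set V) : Prop :=
  2 ≤ S.ncard ∧ ConnWithin A S ∧ ∀ w ∈ S, ConnWithin A (S \ {w})

/-- A biconnected component: a maximal biconnected subgraph. -/
def BiconnComp (A : Set (V × V)) (S : Set V) : Prop :=
  Biconnected A S ∧ ∀ S', Biconnected A S' → S ⊆ S' → S' = S

/-- The arcs leaving a set of vertices. -/
def outArcs (A : Set (V × V)) (S : Set V) : Set (V × V) :=
  {a ∈ A | a.1 ∈ S ∧ a.2 ∉ S}

/-- A phylogenetic network on the (finite) vertex type `V` with leaves labelled by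
elements of `L`: a directed acyclic graph with exactly one vertex of indegree 0
and outdegree 2 (the root), all other vertices being split vertices, reticulation
vertices or leaves; leaves are distinctly labelled.  Moreover (to avoid redundant
networks) every nontrivial biconnected component has at least three outgoing arcs. -/
structure PhyloNetwork (V L : Type) : Type where
  vfin : Finite V
  arcs : Set (V × V)
  lab : V → L
  acyclic : Acyclic arcs
  root_ex : ∃ r, IsRoot arcs r
  root_unique : ∀ r r', IsRoot arcs r → IsRoot arcs r' → r = r'
  vertex_type : ∀ v, IsRoot arcs v ∨ IsSplit arcs v ∨ IsRetic arcs v ∨ IsLeafV arcs v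
  lab_inj : ∀ u v, IsLeafV arcs u → IsLeafV arcs v → lab u = lab v → u = v
  bicomp_out : ∀ S, BiconnComp arcs S → S.ncard ≠ 2 → 3 ≤ (outArcs arcs S).ncard

/-- The set of leaf labels of a network. -/
def leafSet (N : PhyloNetwork V L) : Set L := {x | ∃ v, IsLeafV N.arcs v ∧ N.lab v = x}

/-- A directed path, as a nonempty list of distinct vertices consecutively joined by arcs. -/
def IsPath (A : Set (V × V)) (l : List V) : Prop :=
  l ≠ [] ∧ l.Nodup ∧ l.Chain' fun a b => (a, b) ∈ A

/-- A directed path from `u` to `v`. -/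
def IsPathFromTo (A : Set (V × V)) (l : List V) (u v : V) : Prop :=
  IsPath A l ∧ l.head? = some u ∧ l.getLast? = some v

/-- `w` is an endpoint of the path `l`. -/
def IsEndpoint (l : List V) (w : V) : Prop := l.head? = some w ∨ l.getLast? = some w

/-- Two paths are internally vertex-disjoint: any common vertex is an endpoint of both. -/
def IntDisjoint (p q : List V) : Prop :=
  ∀ w, w ∈ p → w ∈ q → IsEndpoint p w ∧ IsEndpoint q w

/-- An embedding of the triplet `xy|z` with summit `p` and cherry vertex `q`:
pairwise internally vertex-disjoint directed paths `q→x`, `q→y`, `p→q`, `p→z`. -/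
def HasEmbedding (A : Set (V × V)) (p q x y z : V) : Prop :=
  p ≠ q ∧ ∃ Pqx Pqy Ppq Ppz : List V,
    IsPathFromTo A Pqx q x ∧ IsPathFromTo A Pqy q y ∧
    IsPathFromTo A Ppq p q ∧ IsPathFromTo A Ppz p z ∧
    IntDisjoint Pqx Pqy ∧ IntDisjoint Pqx Ppq ∧ IntDisjoint Pqx Ppz ∧
    IntDisjoint Pqy Ppq ∧ IntDisjoint Pqy Ppz ∧ IntDisjoint Ppq Ppz

/-- The triplet `xy|z` (on leaf labels) is consistent with the network `N`. -/
def ConsistentT (N : PhyloNetwork V L) (x y z : L) : Prop :=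
  ∃ a b c : V, IsLeafV N.arcs a ∧ IsLeafV N.arcs b ∧ IsLeafV N.arcs c ∧
    N.lab a = x ∧ N.lab b = y ∧ N.lab c = z ∧ a ≠ b ∧ a ≠ c ∧ b ≠ c ∧
    ∃ p q, HasEmbedding N.arcs p q a b c

/-- `T(N)`: the set of all triplets consistent with `N`
(the triple `(x,y,z)` codes the triplet `xy|z`). -/
def TN (N : PhyloNetwork V L) : Set (L × L × L) := {t | ConsistentT N t.1 t.2.1 t.2.2}

/-- `N` is consistent with every triplet in `T`. -/
def ConsistentSet (N : PhyloNetwork V L) (T : Set (L × L × L)) : Prop :=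
  ∀ t ∈ T, ConsistentT N t.1 t.2.1 t.2.2

/-- `N` reflects `T` if `T(N) = T`. -/
def Reflects (N : PhyloNetwork V L) (T : Set (L × L × L)) : Prop := TN N = T

/-- `L(T)`: the set of leaves occurring in a triplet set. -/
def tripletLeaves (T : Set (L × L × L)) : Set L :=
  {x | ∃ t ∈ T, x = t.1 ∨ x = t.2.1 ∨ x = t.2.2}

/-- `T` is a well-formed triplet set: in each triplet the three leaves are distinct, and
the coding is invariant under swapping the first two coordinates (`xy|z = yx|z`). -/
def IsTripletSet (T : Set (L × L × L)) : Prop :=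
  ∀ t ∈ T, (t.2.1, t.1, t.2.2) ∈ T ∧ t.1 ≠ t.2.1 ∧ t.1 ≠ t.2.2 ∧ t.2.1 ≠ t.2.2

/-- `T` is dense: for any three distinct leaves at least one triplet on them is present. -/
def DenseT (T : Set (L × L × L)) : Prop :=
  ∀ x ∈ tripletLeaves T, ∀ y ∈ tripletLeaves T, ∀ z ∈ tripletLeaves T,
    x ≠ y → x ≠ z → y ≠ z → (x, y, z) ∈ T ∨ (x, z, y) ∈ T ∨ (y, z, x) ∈ T

/-- `S` is an SN-set of `T` with respect to the leaf set `U`: `S ⊆ U` and there is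
no triplet `xy|z ∈ T` with `x, z ∈ S` and `y ∉ S`. -/
def SNSetOn (T : Set (L × L × L)) (U S : Set L) : Prop :=
  S ⊆ U ∧ ¬ ∃ x y z, (x, y, z) ∈ T ∧ x ∈ S ∧ z ∈ S ∧ y ∉ S

/-- `S` is an SN-set of `T`. -/
def SNSet (T : Set (L × L × L)) (S : Set L) : Prop := SNSetOn T (tripletLeaves T) S

/-- `S` is a maximal SN-set: a nontrivial SN-set not strictly contained
in any nontrivial SN-set. -/
def MaxSNSet (T : Set (L × L × L)) (S : Set L) : Prop :=
  SNSet T S ∧ S ≠ tripletLeaves T ∧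
    ∀ S', SNSet T S' → S' ≠ tripletLeaves T → S ⊆ S' → S' = S

/-- `S` is an SN-set maximal under the restriction of not containing `B`. -/
def MaxSNAvoid (T : Set (L × L × L)) (B S : Set L) : Prop :=
  SNSet T S ∧ ¬ B ⊆ S ∧ ∀ S', SNSet T S' → ¬ B ⊆ S' → S ⊆ S' → S' = S

/-- `T|S`: the triplets of `T` all of whose leaves lie in `S`. -/
def restrictT (T : Set (L × L × L)) (S : Set L) : Set (L × L × L) :=
  {t ∈ T | t.1 ∈ S ∧ t.2.1 ∈ S ∧ t.2.2 ∈ S}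

/-- A cut-arc: an arc whose removal disconnects the underlying undirected graph. -/
def CutArc (A : Set (V × V)) (a : V × V) : Prop :=
  a ∈ A ∧ ¬ ConnectedGraph (A \ {a})

/-- A simple network: it contains a reticulation vertex and all its cut-arcs are
trivial (i.e. end in a leaf). -/
def SimpleNet (N : PhyloNetwork V L) : Prop :=
  (∃ v, IsRetic N.arcs v) ∧ ∀ a, CutArc N.arcs a → IsLeafV N.arcs a.2

/-- A level-`k` network: every biconnected component contains at most `k`
reticulation vertices. -/
def IsLevel (N : PhyloNetwork V L) (k : ℕ) : Prop :=
  ∀ S, BiconnComp N.arcs S → {v ∈ S | IsRetic N.arcs v}.ncard ≤ k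

/-- The total number of reticulation vertices of a network. -/
noncomputable def numRetic (N : PhyloNetwork V L) : ℕ := {v | IsRetic N.arcs v}.ncard

/-- The level of a network: the smallest `k` such that it is a level-`k` network. -/
noncomputable def netLevel (N : PhyloNetwork V L) : ℕ := sInf {k | IsLevel N k}

/-- A highest cut-arc: a cut-arc not reachable from any other cut-arc. -/
def HighestCutArc (A : Set (V × V)) (a : V × V) : Prop :=
  CutArc A a ∧ ∀ b, CutArc A b → b ≠ a → ¬ Reaches A b.2 a.1

/-- The set of leaf labels below a vertex `v`. -/
def leavesBelowV (N : PhyloNetwork V L) (v : V) : Set L :=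
  {x | ∃ w, IsLeafV N.arcs w ∧ Reaches N.arcs v w ∧ N.lab w = x}

/-- An (undirected) cycle in the underlying undirected graph, as a list of at least
three distinct vertices that are consecutively adjacent, the last being adjacent
to the first. -/
def IsUCycle (A : Set (V × V)) (l : List V) : Prop :=
  3 ≤ l.length ∧ l.Nodup ∧ l.Chain' (UAdj A) ∧
    ∃ u w, l.head? = some u ∧ l.getLast? = some w ∧ UAdj A w u

/-- A highest reticulation: a reticulation lying on a cycle through the root. -/
def HighestRetic (N : PhyloNetwork V L) (r : V) : Prop :=
  IsRetic N.arcs r ∧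
    ∃ c, IsUCycle N.arcs c ∧ r ∈ c ∧ ∃ rt, IsRoot N.arcs rt ∧ rt ∈ c

/-- `BHR(N)`: the set of leaves below a highest reticulation. -/
def BHR (N : PhyloNetwork V L) : Set L :=
  {x | ∃ r, HighestRetic N r ∧ x ∈ leavesBelowV N r}

/-- The collection of sets of leaves below the highest cut-arcs of `N`. -/
def highCutArcLeafSets (N : PhyloNetwork V L) : Set (Set L) :=
  {S | ∃ a, HighestCutArc N.arcs a ∧ S = leavesBelowV N a.2}

/-- `CutInduce(N,T)`: the induced triplet set on the sets of leaves below the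
highest cut-arcs of `N`. -/
def CutInduce (N : PhyloNetwork V L) (T : Set (L × L × L)) :
    Set (Set L × Set L × Set L) :=
  {t | t.1 ∈ highCutArcLeafSets N ∧ t.2.1 ∈ highCutArcLeafSets N ∧
       t.2.2 ∈ highCutArcLeafSets N ∧
       t.1 ≠ t.2.1 ∧ t.1 ≠ t.2.2 ∧ t.2.1 ≠ t.2.2 ∧
       ∃ x ∈ t.1, ∃ y ∈ t.2.1, ∃ z ∈ t.2.2, (x, y, z) ∈ T}

/-- `T ∇ C`: the triplet set induced by a collection `C` of leaf sets. -/
def TInduced (T : Set (L × L × L)) (C : Set (Set L)) : Set (Set L × Set L × Set L) :=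
  {t | t.1 ∈ C ∧ t.2.1 ∈ C ∧ t.2.2 ∈ C ∧
       t.1 ≠ t.2.1 ∧ t.1 ≠ t.2.2 ∧ t.2.1 ≠ t.2.2 ∧
       ∃ x ∈ t.1, ∃ y ∈ t.2.1, ∃ z ∈ t.2.2, (x, y, z) ∈ T}

/-- A label-preserving isomorphism of networks. -/
def NetIso {V₁ V₂ L : Type} (N₁ : PhyloNetwork V₁ L) (N₂ : PhyloNetwork V₂ L) : Prop :=
  ∃ e : V₁ ≃ V₂, (∀ u v : V₁, (u, v) ∈ N₁.arcs ↔ (e u, e v) ∈ N₂.arcs) ∧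
    ∀ v, IsLeafV N₁.arcs v → N₂.lab (e v) = N₁.lab v

/-- A (rooted, binary) phylogenetic tree given by its arc set: acyclic, a unique
vertex of indegree 0, every vertex of indegree at most 1 and outdegree 0 or 2.
(The single-vertex tree is allowed.) -/
def IsTreeArcs (A : Set (V × V)) : Prop :=
  Acyclic A ∧ (∃! r, indeg A r = 0) ∧ (∀ v, indeg A v ≤ 1) ∧
    ∀ v, outdeg A v = 0 ∨ outdeg A v = 2

/-- The leaf labels of a tree (leaves are the vertices of outdegree 0). -/
def treeLeafSet (A : Set (V × V)) (lab : V → L) : Set L :=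
  {x | ∃ v, outdeg A v = 0 ∧ lab v = x}

/-- The triplet `xy|z` is consistent with the tree given by `A` and labelling `lab`. -/
def TreeConsistentTriplet (A : Set (V × V)) (lab : V → L) (x y z : L) : Prop :=
  ∃ a b c : V, outdeg A a = 0 ∧ outdeg A b = 0 ∧ outdeg A c = 0 ∧
    lab a = x ∧ lab b = y ∧ lab c = z ∧ a ≠ b ∧ a ≠ c ∧ b ≠ c ∧
    ∃ p q, HasEmbedding A p q a b c

/-- A CandidateTBR SN-set: an SN-set `S` of `T` such that `T|S` is consistent with
some phylogenetic tree on the leaf set `S`. -/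
def CandidateTBR (T : Set (L × L × L)) (S : Set L) : Prop :=
  SNSet T S ∧ ∃ (V : Type) (_ : Finite V) (A : Set (V × V)) (lab : V → L),
    IsTreeArcs A ∧
    (∀ u v, outdeg A u = 0 → outdeg A v = 0 → lab u = lab v → u = v) ∧
    treeLeafSet A lab = S ∧
    ∀ t ∈ restrictT T S, TreeConsistentTriplet A lab t.1 t.2.1 t.2.2

/-- `S'` is an SN-set of `T|S` (with leaf set `S`) that is maximal under the
restriction of being a nontrivial (proper) subset of `S`. -/
def MaxProperSN (T : Set (L × L × L)) (S S' : Set L) : Prop :=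
  SNSetOn (restrictT T S) S S' ∧ S' ≠ S ∧
    ∀ S'', SNSetOn (restrictT T S) S S'' → S'' ≠ S → S' ⊆ S'' → S'' = S'

open Finset in
private lemma indeg_eq_fiber {V : Type} [Fintype V] [DecidableEq V]
    (A : Set (V × V)) [DecidablePred (· ∈ A)] (v : V) :
    indeg A v = (A.toFinset.filter (fun a => a.2 = v)).card := by
  classical
  have himg : {u | (u, v) ∈ A}.toFinset
      = (A.toFinset.filter (fun a => a.2 = v)).image Prod.fst := by
    ext u
    simp only [Set.mem_toFinset, Set.mem_setOf_eq, Finset.mem_image,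
      Finset.mem_filter]
    constructor
    · intro h; exact ⟨(u, v), ⟨by simpa using h, rfl⟩, rfl⟩
    · rintro ⟨⟨a, b⟩, ⟨ha, hb⟩, rfl⟩
      simp only at hb; subst hb; simpa using ha
  have hinj : Set.InjOn Prod.fst ((A.toFinset.filter (fun a => a.2 = v)) : Set (V × V)) := by
    rintro ⟨a, b⟩ h1 ⟨c, d⟩ h2 h3
    simp only [Finset.coe_filter, Set.mem_setOf_eq] at h1 h2
    simp only at h3
    simp [h3, h1.2, h2.2]
  have := Finset.card_image_of_injOn hinj
  rw [indeg, Set.ncard_eq_toFinset_card', himg, this]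

open Finset in
private lemma outdeg_eq_fiber {V : Type} [Fintype V] [DecidableEq V]
    (A : Set (V × V)) [DecidablePred (· ∈ A)] (v : V) :
    outdeg A v = (A.toFinset.filter (fun a => a.1 = v)).card := by
  classical
  have himg : {w | (v, w) ∈ A}.toFinset
      = (A.toFinset.filter (fun a => a.1 = v)).image Prod.snd := by
    ext u
    simp only [Set.mem_toFinset, Set.mem_setOf_eq, Finset.mem_image,
      Finset.mem_filter]
    constructor
    · intro h; exact ⟨(v, u), ⟨by simpa using h, rfl⟩, rfl⟩
    · rintro ⟨⟨a, b⟩, ⟨ha, hb⟩, rfl⟩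
      simp only at hb; subst hb; simpa using ha
  have hinj : Set.InjOn Prod.snd ((A.toFinset.filter (fun a => a.1 = v)) : Set (V × V)) := by
    rintro ⟨a, b⟩ h1 ⟨c, d⟩ h2 h3
    simp only [Finset.coe_filter, Set.mem_setOf_eq] at h1 h2
    simp only at h3
    simp [h3, h1.2, h2.2]
  have := Finset.card_image_of_injOn hinj
  rw [outdeg, Set.ncard_eq_toFinset_card', himg, this]

open Finset in
private lemma sum_indeg_eq {V : Type} [Fintype V] (A : Set (V × V)) :
    ∑ v, indeg A v = A.ncard := by
  classical
  have := Finset.card_eq_sum_card_fiberwise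
    (fun (a : V × V) (_ : a ∈ A.toFinset) => Finset.mem_univ a.2)
  rw [Set.ncard_eq_toFinset_card', this]
  exact Finset.sum_congr rfl fun v _ => indeg_eq_fiber A v

open Finset in
private lemma sum_outdeg_eq {V : Type} [Fintype V] (A : Set (V × V)) :
    ∑ v, outdeg A v = A.ncard := by
  classical
  have := Finset.card_eq_sum_card_fiberwise
    (fun (a : V × V) (_ : a ∈ A.toFinset) => Finset.mem_univ a.1)
  rw [Set.ncard_eq_toFinset_card', this]
  exact Finset.sum_congr rfl fun v _ => outdeg_eq_fiber A v

/-- A simple level-`k` generator (a digraph with exactly one vertex of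
indegree 0 and outdegree 2, exactly `k ≥ 1` reticulation vertices of indegree 2 and
outdegree at most 1, all remaining vertices having indegree 1 and outdegree 2) has at
most `2k-2` split vertices, hence at most `3k-1` vertices and at most `(9k-3)/2` arcs. -/
theorem generator_size_bound (V : Type) [Finite V] (A : Set (V × V)) (k : ℕ)
    (hk : 1 ≤ k)
    (hroot : {v : V | indeg A v = 0 ∧ outdeg A v = 2}.ncard = 1)
    (hret : {v : V | indeg A v = 2 ∧ outdeg A v ≤ 1}.ncard = k)
    (hrest : ∀ v : V, ¬ (indeg A v = 0 ∧ outdeg A v = 2) →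
      ¬ (indeg A v = 2 ∧ outdeg A v ≤ 1) → indeg A v = 1 ∧ outdeg A v = 2) :
    {v : V | indeg A v = 1 ∧ outdeg A v = 2}.ncard ≤ 2 * k - 2 ∧
    Nat.card V ≤ 3 * k - 1 ∧
    (A.ncard : ℚ) ≤ (9 * k - 3) / 2 := by
  classical
  haveI : Fintype V := Fintype.ofFinite V
  set Rt : Finset V := Finset.univ.filter (fun v => indeg A v = 0 ∧ outdeg A v = 2) with hRt
  set Re : Finset V := Finset.univ.filter (fun v => indeg A v = 2 ∧ outdeg A v ≤ 1) with hRe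
  set Sp : Finset V := Finset.univ.filter (fun v => indeg A v = 1 ∧ outdeg A v = 2) with hSp
  have hcardRt : Rt.card = 1 := by
    rw [← hroot, Set.ncard_eq_toFinset_card', Set.toFinset_setOf]
  have hcardRe : Re.card = k := by
    rw [← hret, Set.ncard_eq_toFinset_card', Set.toFinset_setOf]
  have hcardSp : {v : V | indeg A v = 1 ∧ outdeg A v = 2}.ncard = Sp.card := by
    rw [Set.ncard_eq_toFinset_card', Set.toFinset_setOf]
  -- partition of univ
  have hcover : (Finset.univ : Finset V) = Rt ∪ Re ∪ Sp := by
    ext v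
    simp only [Finset.mem_univ, true_iff, Finset.mem_union, hRt, hRe, hSp,
      Finset.mem_filter, Finset.mem_univ, true_and]
    by_cases h1 : indeg A v = 0 ∧ outdeg A v = 2
    · exact Or.inl (Or.inl h1)
    by_cases h2 : indeg A v = 2 ∧ outdeg A v ≤ 1
    · exact Or.inl (Or.inr h2)
    · exact Or.inr (hrest v h1 h2)
  have hd1 : Disjoint Rt Re := by
    rw [Finset.disjoint_left]
    intro v hv hv'
    simp only [hRt, hRe, Finset.mem_filter] at hv hv'
    omega
  have hd2 : Disjoint (Rt ∪ Re) Sp := by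
    rw [Finset.disjoint_left]
    intro v hv hv'
    simp only [hRt, hRe, hSp, Finset.mem_union, Finset.mem_filter] at hv hv'
    rcases hv with h | h <;> omega
  -- sums of degrees
  have hsum_in : A.ncard = 2 * k + Sp.card := by
    rw [← sum_indeg_eq A, hcover, Finset.sum_union hd2, Finset.sum_union hd1]
    have e1 : ∑ v ∈ Rt, indeg A v = 0 := by
      apply Finset.sum_eq_zero
      intro v hv
      simp only [hRt, Finset.mem_filter] at hv
      exact hv.2.1
    have e2 : ∑ v ∈ Re, indeg A v = 2 * k := by
      rw [Finset.sum_congr rfl (fun v hv => by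
        simp only [hRe, Finset.mem_filter] at hv; exact hv.2.1)]
      simp [hcardRe, mul_comm]
    have e3 : ∑ v ∈ Sp, indeg A v = Sp.card := by
      rw [Finset.sum_congr rfl (fun v hv => by
        simp only [hSp, Finset.mem_filter] at hv; exact hv.2.1)]
      simp
    rw [e1, e2, e3]; ring
  have hsum_out : 2 + 2 * Sp.card ≤ A.ncard := by
    rw [← sum_outdeg_eq A, hcover, Finset.sum_union hd2, Finset.sum_union hd1]
    have e1 : ∑ v ∈ Rt, outdeg A v = 2 := by
      rw [Finset.sum_congr rfl (fun v hv => by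
        simp only [hRt, Finset.mem_filter] at hv; exact hv.2.2)]
      simp [hcardRt]
    have e3 : ∑ v ∈ Sp, outdeg A v = 2 * Sp.card := by
      rw [Finset.sum_congr rfl (fun v hv => by
        simp only [hSp, Finset.mem_filter] at hv; exact hv.2.2)]
      simp [mul_comm]
    rw [e1, e3]
    omega
  -- spine inequality: s ≤ 2k - 2
  have hs : Sp.card + 2 ≤ 2 * k := by omega
  have hcardV : Nat.card V = 1 + k + Sp.card := by
    rw [Nat.card_eq_fintype_card, ← Finset.card_univ, hcover,
      Finset.card_union_of_disjoint hd2, Finset.card_union_of_disjoint hd1,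
      hcardRt, hcardRe]
  refine ⟨by omega, by omega, ?_⟩
  have h2A : 2 * A.ncard + 3 ≤ 9 * k := by omega
  have : (A.ncard : ℚ) * 2 ≤ 9 * k - 3 := by
    have := (Nat.cast_le (α := ℚ)).2 h2A
    push_cast at this
    linarith
  linarith [this]

end Phylo
end

section
/- Let k ≥ 1 be fixed and let N be a level-k phylogenetic network with n leaves. Then N has at most n + (n−1)(3k−1) + (2n−2) vertices and at most (2n−2) + (n−1)(9k−3)/2 + (2n−2) arcs; in particular, N has O(n) vertices and O(n) arcs. -/
/-!
Common definitions for formalizing "Constructing the Simplest Possible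
Phylogenetic Network from Triplets" (van Iersel, Kelk).

A directed graph on a vertex type `V` is given by its arc set `A : Set (V × V)`.
-/

namespace Phylo

variable {V L : Type}

/-!
Every reticulation lies on a cycle, hence in a nontrivial biconnected component (a *block*), so a
level-`k` network with `r` reticulations and `b` blocks has `r ≤ k b`. Contracting every block to a
vertex leaves a tree in which each block has at least three children, so `b ≤ n - 1`; proved from
the leaves up, this says that below every vertex there are more leaves than blocks. Counting the
arcs by heads and by tails gives `|V| = 2n + 2r - 1` and `|A| = 2n + 3r - 2`, and `r ≤ k (n - 1)`
yields both bounds.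
-/

open Relation

/-- `SimplePath r u v S`: `S` is the vertex set of a simple `r`-path from `u` to `v`. -/
inductive SimplePath (r : V → V → Prop) : V → V → Set V → Prop
  | refl (v : V) : SimplePath r v v {v}
  | cons {u w v : V} {S : Set V} (h : r u w) (hp : SimplePath r w v S) (hu : u ∉ S) :
      SimplePath r u v (insert u S)

namespace SimplePath

variable {r : V → V → Prop} {u v w : V} {S : Set V}

theorem head_mem (h : SimplePath r u v S) : u ∈ S := by
  cases h with
  | refl => exact rfl
  | cons => exact Set.mem_insert _ _

theorem last_mem (h : SimplePath r u v S) : v ∈ S := by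
  induction h with
  | refl => exact rfl
  | cons _ _ _ ih => exact Set.mem_insert_of_mem _ ih

theorem reflTransGen_of_mem (h : SimplePath r u v S) {x : V} (hx : x ∈ S) :
    ReflTransGen r u x ∧ ReflTransGen r x v := by
  induction h generalizing x with
  | refl => obtain rfl := hx; exact ⟨.refl, .refl⟩
  | cons huw hp _ ih =>
    rcases hx with rfl | hx
    · exact ⟨.refl, .head huw (ih hp.head_mem).2⟩
    · exact ⟨.head huw (ih hx).1, (ih hx).2⟩

theorem mono {r' : V → V → Prop} (hrr : ∀ a b, r a b → r' a b) (h : SimplePath r u v S) :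
    SimplePath r' u v S := by
  induction h with
  | refl v => exact .refl v
  | cons huw _ hu ih => exact .cons (hrr _ _ huw) ih hu

theorem suffix (h : SimplePath r u v S) (hw : w ∈ S) : ∃ S' ⊆ S, SimplePath r w v S' := by
  induction h with
  | refl => obtain rfl := hw; exact ⟨_, subset_rfl, .refl _⟩
  | cons huw hp hu ih =>
    rcases hw with rfl | hw
    · exact ⟨_, subset_rfl, .cons huw hp hu⟩
    · obtain ⟨S', hS', h'⟩ := ih hw
      exact ⟨S', hS'.trans (Set.subset_insert _ _), h'⟩

theorem suffix_of_ne_head (h : SimplePath r u v S) (hw : w ∈ S) (hwu : w ≠ u) :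
    ∃ S' ⊆ S, u ∉ S' ∧ SimplePath r w v S' := by
  cases h with
  | refl => exact absurd hw hwu
  | cons _ hp hu =>
    obtain ⟨S', hS', h'⟩ := hp.suffix (hw.resolve_left hwu)
    exact ⟨S', hS'.trans (Set.subset_insert _ _), fun h => hu (hS' h), h'⟩

theorem exists_of_reflTransGen (h : ReflTransGen r u v) : ∃ S, SimplePath r u v S := by
  induction h using ReflTransGen.head_induction_on with
  | refl => exact ⟨_, .refl _⟩
  | @head a c hac _ ih =>
    obtain ⟨S, hS⟩ := ih
    by_cases ha : a ∈ S
    · obtain ⟨S', -, h'⟩ := hS.suffix ha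
      exact ⟨S', h'⟩
    · exact ⟨_, .cons hac hS ha⟩

theorem snoc (h : SimplePath r u v S) (hvw : r v w) (hw : w ∉ S) :
    SimplePath r u w (insert w S) := by
  induction h with
  | refl v =>
    rw [Set.pair_comm]
    exact .cons hvw (.refl w) (by simpa [eq_comm] using hw)
  | @cons u' _ _ S huw _ hu ih =>
    have hwu' : w ≠ u' := fun h => hw (h ▸ Set.mem_insert _ _)
    rw [Set.insert_comm]
    exact .cons huw (ih hvw fun h => hw (Set.mem_insert_of_mem _ h))
      (by simpa [Ne.symm hwu'] using hu)

theorem reverse (h : SimplePath r u v S) : SimplePath (flip r) v u S := by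
  induction h with
  | refl v => exact .refl v
  | cons huw _ hu ih => exact ih.snoc huw hu

theorem append {S' : Set V} (h : SimplePath r u v S) (h' : SimplePath r v w S')
    (hSS' : S ∩ S' ⊆ {v}) : SimplePath r u w (S ∪ S') := by
  induction h with
  | refl v =>
    rwa [Set.union_eq_self_of_subset_left (Set.singleton_subset_iff.2 h'.head_mem)]
  | @cons u' _ v S huw hp hu ih =>
    have hu'v : u' ≠ v := fun h => hu (h ▸ hp.last_mem)
    rw [Set.insert_union]
    refine .cons huw (ih h' fun x hx => hSS' ⟨Set.mem_insert_of_mem _ hx.1, hx.2⟩) ?_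
    exact fun hu' => hu'v (hSS' ⟨Set.mem_insert _ _, hu'.resolve_left hu⟩)

theorem exists_inter_subset_singleton [Finite V] {z a₁ a₂ : V} {S₁ S₂ : Set V}
    (h₁ : SimplePath r z a₁ S₁) (h₂ : SimplePath r z a₂ S₂) :
    ∃ z' T₁ T₂, SimplePath r z' a₁ T₁ ∧ SimplePath r z' a₂ T₂ ∧ T₁ ∩ T₂ ⊆ {z'} := by
  induction hn : S₁.ncard + S₂.ncard using Nat.strong_induction_on generalizing z S₁ S₂ with
  | _ n ih =>
  by_cases hdisj : S₁ ∩ S₂ ⊆ {z}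
  · exact ⟨z, S₁, S₂, h₁, h₂, hdisj⟩
  obtain ⟨t, ⟨ht₁, ht₂⟩, htz⟩ := Set.not_subset.1 hdisj
  obtain ⟨T₁, hT₁, hz₁, hp₁⟩ := h₁.suffix_of_ne_head ht₁ htz
  obtain ⟨T₂, hT₂, hz₂, hp₂⟩ := h₂.suffix_of_ne_head ht₂ htz
  have hlt₁ : T₁.ncard < S₁.ncard :=
    Set.ncard_lt_ncard ((Set.ssubset_iff_of_subset hT₁).2 ⟨z, h₁.head_mem, hz₁⟩)
  have hlt₂ : T₂.ncard < S₂.ncard :=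
    Set.ncard_lt_ncard ((Set.ssubset_iff_of_subset hT₂).2 ⟨z, h₂.head_mem, hz₂⟩)
  exact ih _ (by omega) hp₁ hp₂ rfl

end SimplePath

section Biconnected

variable {A : Set (V × V)} {S T : Set V} {u v w x y : V}

def JoinedIn (A : Set (V × V)) (T : Set V) : V → V → Prop :=
  ReflTransGen fun a b => a ∈ T ∧ b ∈ T ∧ UAdj A a b

namespace JoinedIn

theorem trans (h : JoinedIn A T x y) (h' : JoinedIn A T y w) : JoinedIn A T x w :=
  ReflTransGen.trans h h'

theorem mono (hTT' : T ⊆ S) (h : JoinedIn A T x y) : JoinedIn A S x y :=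
  ReflTransGen.mono (fun _ _ hab => ⟨hTT' hab.1, hTT' hab.2.1, hab.2.2⟩) _ _ h

theorem symm (h : JoinedIn A T x y) : JoinedIn A T y x :=
  ReflTransGen.mono (fun _ _ hab => ⟨hab.2.1, hab.1, hab.2.2.symm⟩) _ _ (ReflTransGen.swap _ _ h)

theorem exists_uAdj (h : JoinedIn A T x y) (hxy : x ≠ y) : ∃ w ∈ T, UAdj A x w := by
  obtain rfl | ⟨w, hstep, _⟩ := h.cases_head
  · exact absurd rfl hxy
  · exact ⟨w, hstep.2.1, hstep.2.2⟩

theorem mem_right (h : JoinedIn A T x y) (hxy : x ≠ y) : y ∈ T := by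
  obtain rfl | ⟨_, _, hstep⟩ := h.cases_tail
  · exact absurd rfl hxy
  · exact hstep.2.1

end JoinedIn

theorem ConnWithin.joinedIn (h : ConnWithin A S) (hx : x ∈ S) (hy : y ∈ S) : JoinedIn A S x y :=
  h x hx y hy

theorem connWithin_of_forall_joinedIn (c : V) (h : ∀ x ∈ S, JoinedIn A S x c) :
    ConnWithin A S :=
  fun x hx y hy => (h x hx).trans (h y hy).symm

theorem Biconnected.connWithin_diff (h : Biconnected A S) (w : V) : ConnWithin A (S \ {w}) := by
  by_cases hw : w ∈ S
  · exact h.2.2 w hw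
  · rw [Set.sdiff_singleton_eq_self hw]
    exact h.2.1

namespace SimplePath

theorem joinedIn_last (h : SimplePath (UAdj A) u v S) (hx : x ∈ S) : JoinedIn A S x v := by
  induction h generalizing x with
  | refl => obtain rfl := hx; exact .refl
  | @cons u' _ _ S₀ huw hp _ ih =>
    have hsub := Set.subset_insert u' S₀
    rcases hx with rfl | hx
    · exact .head ⟨Set.mem_insert _ _, hsub hp.head_mem, huw⟩ ((ih hp.head_mem).mono hsub)
    · exact (ih hx).mono hsub

theorem joinedIn_diff (h : SimplePath (UAdj A) u v S) (hx : x ∈ S) (hxw : x ≠ w) :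
    JoinedIn A (S \ {w}) x u ∨ JoinedIn A (S \ {w}) x v := by
  induction h generalizing x with
  | refl => exact .inl (hx ▸ .refl)
  | @cons u' h' v S₀ huw hp hu ih =>
    rcases hx with rfl | hx
    · exact .inl .refl
    have hsub : S₀ \ {w} ⊆ insert u' S₀ \ {w} := Set.sdiff_subset_sdiff_left (Set.subset_insert _ _)
    by_cases hwu : w = u'
    · subst hwu
      have : S₀ ⊆ insert w S₀ \ {w} := fun a ha =>
        ⟨Set.mem_insert_of_mem _ ha, fun haw => hu (haw ▸ ha)⟩
      exact .inr ((hp.joinedIn_last hx).mono this)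
    rcases ih hx hxw with hc | hc
    · by_cases hxh : x = h'
      · subst hxh
        exact .inl (.single ⟨⟨Set.mem_insert_of_mem _ hx, hxw⟩, ⟨Set.mem_insert _ _, Ne.symm hwu⟩,
          huw.symm⟩)
      · exact .inl ((hc.mono hsub).tail ⟨hsub (hc.mem_right hxh),
          ⟨Set.mem_insert _ _, Ne.symm hwu⟩, huw.symm⟩)
    · exact .inr (hc.mono hsub)

end SimplePath

theorem biconnected_pair (huv : u ≠ v) (hadj : UAdj A u v) : Biconnected A {u, v} := by
  refine ⟨(Set.ncard_pair huv).ge, connWithin_of_forall_joinedIn v ?_, ?_⟩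
  · rintro x (rfl | rfl)
    · exact .single ⟨Set.mem_insert _ _, Set.mem_insert_of_mem _ rfl, hadj⟩
    · exact .refl
  · rintro w hw x ⟨hx, hxw⟩ y ⟨hy, hyw⟩
    obtain rfl : x = y := by
      simp only [Set.mem_insert_iff, Set.mem_singleton_iff] at hw hx hy hxw hyw
      grind
    exact .refl

theorem Biconnected.union_simplePath [Finite V] (hB : Biconnected A T)
    (hS : SimplePath (UAdj A) u v S) (hu : u ∈ T) (hv : v ∈ T) : Biconnected A (T ∪ S) := by
  refine ⟨hB.1.trans (Set.ncard_le_ncard Set.subset_union_left), ?_, fun w _ => ?_⟩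
  · refine connWithin_of_forall_joinedIn u ?_
    rintro x (hx | hx)
    · exact (hB.2.1.joinedIn hx hu).mono Set.subset_union_left
    · exact ((hS.joinedIn_last hx).trans (hS.joinedIn_last hS.head_mem).symm).mono
        Set.subset_union_right
  obtain ⟨c, hcT, hcw⟩ := Set.exists_ne_of_one_lt_ncard hB.1 w
  have hT : ∀ x ∈ T, x ≠ w → JoinedIn A ((T ∪ S) \ {w}) x c := fun x hx hxw =>
    ((hB.connWithin_diff w).joinedIn ⟨hx, hxw⟩ ⟨hcT, hcw⟩).mono
      (Set.sdiff_subset_sdiff_left Set.subset_union_left)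
  have hS' : S \ {w} ⊆ (T ∪ S) \ {w} := Set.sdiff_subset_sdiff_left Set.subset_union_right
  refine connWithin_of_forall_joinedIn c ?_
  rintro x ⟨hx | hx, hxw⟩
  · exact hT x hx hxw
  by_cases hxT : x ∈ T
  · exact hT x hxT hxw
  have hend : ∀ e ∈ T, JoinedIn A (S \ {w}) x e → JoinedIn A ((T ∪ S) \ {w}) x c :=
    fun e he h => (h.mono hS').trans (hT e he (h.mem_right (ne_of_mem_of_not_mem he hxT).symm).2)
  rcases hS.joinedIn_diff hx hxw with h | h
  exacts [hend u hu h, hend v hv h]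

theorem Biconnected.union [Finite V] (hS : Biconnected A S) (hT : Biconnected A T)
    (hx : x ∈ S ∩ T) (hy : y ∈ S ∩ T) (hxy : x ≠ y) : Biconnected A (S ∪ T) := by
  refine ⟨hS.1.trans (Set.ncard_le_ncard Set.subset_union_left), ?_, fun w _ => ?_⟩
  · refine connWithin_of_forall_joinedIn x ?_
    rintro a (ha | ha)
    · exact (hS.2.1.joinedIn ha hx.1).mono Set.subset_union_left
    · exact (hT.2.1.joinedIn ha hx.2).mono Set.subset_union_right
  obtain ⟨e, he, hew⟩ : ∃ e ∈ S ∩ T, e ≠ w := by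
    by_cases hxw : x = w
    · exact ⟨y, hy, hxw ▸ hxy.symm⟩
    · exact ⟨x, hx, hxw⟩
  refine connWithin_of_forall_joinedIn e ?_
  rintro a ⟨ha | ha, haw⟩
  · exact ((hS.connWithin_diff w).joinedIn ⟨ha, haw⟩ ⟨he.1, hew⟩).mono
      (Set.sdiff_subset_sdiff_left Set.subset_union_left)
  · exact ((hT.connWithin_diff w).joinedIn ⟨ha, haw⟩ ⟨he.2, hew⟩).mono
      (Set.sdiff_subset_sdiff_left Set.subset_union_right)

theorem Biconnected.exists_biconnComp [Finite V] (hS : Biconnected A S) :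
    ∃ B, BiconnComp A B ∧ S ⊆ B := by
  obtain ⟨B, ⟨hB, hSB⟩, hmax⟩ := Set.Finite.exists_maximal (s := {T | Biconnected A T ∧ S ⊆ T})
    (Set.toFinite _) ⟨S, hS, subset_rfl⟩
  exact ⟨B, ⟨hB, fun T hT hBT => (hmax ⟨hT, hSB.trans hBT⟩ hBT).antisymm hBT⟩, hSB⟩

namespace BiconnComp

variable [Finite V] {B B' : Set V}

theorem eq_of_mem_of_mem (hB : BiconnComp A B) (hB' : BiconnComp A B') (hx : x ∈ B ∩ B')
    (hy : y ∈ B ∩ B') (hxy : x ≠ y) : B = B' := by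
  have hu := hB.1.union hB'.1 hx hy hxy
  rw [← hB.2 _ hu Set.subset_union_left, hB'.2 _ hu Set.subset_union_right]

theorem subset_of_simplePath (hB : BiconnComp A B) (hS : SimplePath (UAdj A) u v S)
    (hu : u ∈ B) (hv : v ∈ B) : S ⊆ B := by
  rw [← hB.2 _ (hB.1.union_simplePath hS hu hv) Set.subset_union_left]
  exact Set.subset_union_right

theorem mem_of_uAdj (hB : BiconnComp A B) (hvw : v ≠ w) (hv : v ∈ B) (hw : w ∈ B)
    (hxv : UAdj A x v) (hxw : UAdj A x w) : x ∈ B := by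
  by_contra hx
  have hpath : SimplePath (UAdj A) v w {v, x, w} :=
    .cons hxv.symm (.cons hxw (.refl w) (by simpa using ne_of_mem_of_not_mem hw hx |>.symm))
      (by simp [ne_of_mem_of_not_mem hv hx, hvw])
  exact hx (hB.subset_of_simplePath hpath hv hw (by simp))

end BiconnComp

theorem Biconnected.two_le_ncard_inter_uAdj [Finite V] (hS : Biconnected A S)
    (h3 : 3 ≤ S.ncard) (hv : v ∈ S) (hvv : ¬ UAdj A v v) : 2 ≤ (S ∩ {w | UAdj A v w}).ncard := by
  obtain ⟨z, hz, hzv⟩ := Set.exists_ne_of_one_lt_ncard (by omega : 1 < S.ncard) v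
  obtain ⟨w₁, hw₁, hvw₁⟩ := (hS.2.1.joinedIn hv hz).exists_uAdj hzv.symm
  have hw₁v : w₁ ≠ v := fun h => hvv (h ▸ hvw₁)
  obtain ⟨z', hz', hz'v⟩ := Set.exists_ne_of_one_lt_ncard
    (by rw [Set.ncard_sdiff_singleton_of_mem hw₁]; omega : 1 < (S \ {w₁}).ncard) v
  obtain ⟨w₂, ⟨hw₂, hw₂w₁⟩, hvw₂⟩ :=
    ((hS.2.2 w₁ hw₁).joinedIn ⟨hv, hw₁v.symm⟩ hz').exists_uAdj hz'v.symm
  exact (Set.one_lt_ncard_iff).2 ⟨w₁, w₂, ⟨hw₁, hvw₁⟩, ⟨hw₂, hvw₂⟩, Ne.symm hw₂w₁⟩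

/-- The set is the cycle `y, a₁, …, z', …, a₂, y` through the last common vertex `z'` of two
paths from `z` to `a₁` and `a₂`. -/
theorem exists_biconnected_of_reflTransGen [Finite V] {r : V → V → Prop}
    (hr : ∀ a b, r a b → UAdj A a b) (hacyc : ∀ a b, r a b → ¬ ReflTransGen r b a)
    {z a₁ a₂ : V} (h₁ : ReflTransGen r z a₁) (h₂ : ReflTransGen r z a₂)
    (hy₁ : r a₁ y) (hy₂ : r a₂ y) : ∃ S, Biconnected A S ∧ y ∈ S ∧ a₁ ∈ S ∧ a₂ ∈ S := by
  obtain ⟨S₁, hS₁⟩ := SimplePath.exists_of_reflTransGen h₁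
  obtain ⟨S₂, hS₂⟩ := SimplePath.exists_of_reflTransGen h₂
  obtain ⟨z', T₁, T₂, hp₁, hp₂, hT⟩ := hS₁.exists_inter_subset_singleton hS₂
  have hyT : ∀ {a T}, SimplePath r z' a T → r a y → y ∉ T := fun hp hay hyT =>
    hacyc _ _ hay (hp.reflTransGen_of_mem hyT).2
  have hback : SimplePath (UAdj A) a₁ z' T₁ :=
    (hp₁.mono hr).reverse.mono fun _ _ h => Or.symm h
  have hfore : SimplePath (UAdj A) z' y (insert y T₂) :=
    (hp₂.mono hr).snoc (hr _ _ hy₂) (hyT hp₂ hy₂)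
  have hear := hback.append hfore fun x ⟨hx₁, hx₂⟩ => by
    rcases hx₂ with rfl | hx₂
    exacts [absurd hx₁ (hyT hp₁ hy₁), hT ⟨hx₁, hx₂⟩]
  have ha₁y : a₁ ≠ y := ne_of_mem_of_not_mem hp₁.last_mem (hyT hp₁ hy₁)
  refine ⟨_, (biconnected_pair ha₁y (hr _ _ hy₁)).union_simplePath hear (by simp) (by simp),
    by simp, by simp, ?_⟩
  exact Or.inr (Or.inr (Or.inr hp₂.last_mem))

end Biconnected

section Digraph

variable {A : Set (V × V)} {v : V}

theorem Acyclic.irrefl (hA : Acyclic A) (v : V) : (v, v) ∉ A :=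
  fun h => hA v v h .refl

theorem Acyclic.not_transGen (hA : Acyclic A) (v : V) : ¬ TransGen (fun a b => (a, b) ∈ A) v v :=
  fun h => by
    obtain ⟨w, hvw, hwv⟩ := TransGen.head'_iff.1 h
    exact hA v w hvw hwv

theorem wellFounded_transGen_of_irrefl [Finite V] {r : V → V → Prop}
    (h : ∀ v, ¬ TransGen r v v) : WellFounded (TransGen r) :=
  haveI : IsTrans V (TransGen r) := ⟨fun _ _ _ => TransGen.trans⟩
  haveI : Std.Irrefl (TransGen r) := ⟨h⟩
  Finite.wellFounded_of_trans_of_irrefl _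

theorem Acyclic.wellFounded_ancestor [Finite V] (hA : Acyclic A) :
    WellFounded (TransGen fun a b => (a, b) ∈ A) :=
  wellFounded_transGen_of_irrefl hA.not_transGen

theorem Acyclic.wellFounded_descendant [Finite V] (hA : Acyclic A) :
    WellFounded fun w v => TransGen (fun a b => (a, b) ∈ A) v w := by
  refine Subrelation.wf (fun h => transGen_swap.2 h) (wellFounded_transGen_of_irrefl
    (r := fun a b => (b, a) ∈ A) fun v h => hA.not_transGen v (transGen_swap.1 h))

theorem outdeg_eq_zero_iff [Finite V] : outdeg A v = 0 ↔ ∀ w, (v, w) ∉ A := by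
  rw [outdeg, Set.ncard_eq_zero]
  simp [Set.eq_empty_iff_forall_notMem]

theorem ncard_uAdj_le [Finite V] (v : V) : {w | UAdj A v w}.ncard ≤ indeg A v + outdeg A v := by
  rw [add_comm]
  exact (Set.ncard_le_ncard fun w hw => hw).trans (Set.ncard_union_le _ _)

theorem ncard_eq_sum_outdeg [Fintype V] (A : Set (V × V)) : A.ncard = ∑ v, outdeg A v := by
  have hA : A = ⋃ v, Prod.mk v '' {w | (v, w) ∈ A} := by ext ⟨v, w⟩; simp
  conv_lhs => rw [hA]
  rw [Set.ncard_iUnion_of_finite (fun _ => Set.toFinite _), finsum_eq_sum_of_fintype]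
  · exact Finset.sum_congr rfl fun v _ => Set.ncard_image_of_injective _ (Prod.mk_right_injective v)
  · exact fun v v' hvv' => Set.disjoint_left.2 fun _ ⟨_, _, hw⟩ ⟨_, _, hw'⟩ =>
      hvv' (Prod.ext_iff.1 (hw.trans hw'.symm)).1

theorem ncard_eq_sum_indeg [Fintype V] (A : Set (V × V)) : A.ncard = ∑ v, indeg A v := by
  rw [← Set.ncard_image_of_injective A Prod.swap_injective, Set.image_swap_eq_preimage_swap,
    ncard_eq_sum_outdeg]
  rfl

theorem sum_ite_eq_ncard [Fintype V] (p : V → Prop) [DecidablePred p] :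
    ∑ v, (if p v then 1 else 0) = {v | p v}.ncard := by
  rw [Finset.sum_boole, Set.ncard_eq_toFinset_card', Set.toFinset_ofPred, Nat.cast_id]

/-- The path is `u₁, x, …, z', …, y, u₂`, where `z'` is the first common descendant of `x` and `y`
on the way to `z`. -/
theorem exists_simplePath_of_reaches [Finite V] {u₁ u₂ x y z : V} (h₁ : (u₁, x) ∈ A)
    (h₂ : (u₂, y) ∈ A) (hu : u₁ ≠ u₂) (hx : Reaches A x z) (hy : Reaches A y z)
    (hout : ∀ t, Reaches A x t ∨ Reaches A y t → t ≠ u₁ ∧ t ≠ u₂) :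
    ∃ S, SimplePath (UAdj A) u₁ u₂ S ∧ x ∈ S := by
  obtain ⟨S₁, hS₁⟩ := SimplePath.exists_of_reflTransGen
    (r := fun a b => (b, a) ∈ A) (reflTransGen_swap.2 hx)
  obtain ⟨S₂, hS₂⟩ := SimplePath.exists_of_reflTransGen
    (r := fun a b => (b, a) ∈ A) (reflTransGen_swap.2 hy)
  obtain ⟨z', T₁, T₂, hp₁, hp₂, hT⟩ := hS₁.exists_inter_subset_singleton hS₂
  have hT₁ : ∀ t ∈ T₁, t ≠ u₁ ∧ t ≠ u₂ := fun t ht =>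
    hout t (.inl (reflTransGen_swap.1 (hp₁.reflTransGen_of_mem ht).2))
  have hT₂ : ∀ t ∈ T₂, t ≠ u₁ ∧ t ≠ u₂ := fun t ht =>
    hout t (.inr (reflTransGen_swap.1 (hp₂.reflTransGen_of_mem ht).2))
  have hP₁ : SimplePath (UAdj A) u₁ z' (insert u₁ T₁) :=
    .cons (Or.inl h₁) (hp₁.reverse.mono fun _ _ h => Or.inl h) fun h => (hT₁ _ h).1 rfl
  have hP₂ : SimplePath (UAdj A) z' u₂ (insert u₂ T₂) :=
    (hp₂.mono fun _ _ h => Or.inr h).snoc (Or.inr h₂) fun h => (hT₂ _ h).2 rfl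
  refine ⟨_, hP₁.append hP₂ fun a ⟨ha₁, ha₂⟩ => ?_, .inl (Set.mem_insert_of_mem _ hp₁.last_mem)⟩
  rcases ha₁ with rfl | ha₁ <;> rcases ha₂ with rfl | ha₂
  · exact absurd rfl hu
  · exact absurd rfl (hT₂ _ ha₂).1
  · exact absurd rfl (hT₁ _ ha₁).2
  · exact hT ⟨ha₁, ha₂⟩

end Digraph

namespace PhyloNetwork

variable (N : PhyloNetwork V L) {u v w x y : V} {B B' : Set V}

theorem isLeafV_of_outdeg_eq_zero (h : outdeg N.arcs v = 0) : IsLeafV N.arcs v := by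
  rcases N.vertex_type v with hv | hv | hv | hv <;> first | exact hv | (have := hv.2; omega)

theorem isRoot_of_indeg_eq_zero (h : indeg N.arcs v = 0) : IsRoot N.arcs v := by
  rcases N.vertex_type v with hv | hv | hv | hv <;> first | exact hv | (have := hv.1; omega)

theorem indeg_add_outdeg_le_three (v : V) : indeg N.arcs v + outdeg N.arcs v ≤ 3 := by
  rcases N.vertex_type v with ⟨h₁, h₂⟩ | ⟨h₁, h₂⟩ | ⟨h₁, h₂⟩ | ⟨h₁, h₂⟩ <;> omega

theorem not_uAdj_self (v : V) : ¬ UAdj N.arcs v v :=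
  fun h => h.elim (N.acyclic.irrefl v) (N.acyclic.irrefl v)

theorem exists_isLeafV_reaches (v : V) : ∃ w, IsLeafV N.arcs w ∧ Reaches N.arcs v w := by
  have := N.vfin
  induction v using N.acyclic.wellFounded_descendant.induction with
  | _ v ih =>
  by_cases hv : outdeg N.arcs v = 0
  · exact ⟨v, N.isLeafV_of_outdeg_eq_zero hv, .refl⟩
  obtain ⟨c, hc⟩ := Set.nonempty_of_ncard_ne_zero hv
  obtain ⟨w, hw, hcw⟩ := ih c (.single hc)
  exact ⟨w, hw, .head hc hcw⟩

theorem reaches_of_isRoot {rt : V} (hrt : IsRoot N.arcs rt) (v : V) : Reaches N.arcs rt v := by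
  have := N.vfin
  induction v using N.acyclic.wellFounded_ancestor.induction with
  | _ v ih =>
  by_cases hv : indeg N.arcs v = 0
  · obtain rfl := N.root_unique v rt (N.isRoot_of_indeg_eq_zero hv) hrt
    exact .refl
  obtain ⟨u, hu⟩ := Set.nonempty_of_ncard_ne_zero hv
  exact (ih u (.single hu)).tail hu

theorem ncard_uAdj_le_three (v : V) : {w | UAdj N.arcs v w}.ncard ≤ 3 := by
  have := N.vfin
  exact (ncard_uAdj_le v).trans (N.indeg_add_outdeg_le_three v)

/-- A biconnected component with two vertices is a single arc. -/
def nontrivialBlocks : Set (Set V) := {B | BiconnComp N.arcs B ∧ 3 ≤ B.ncard}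

theorem two_le_ncard_inter_uAdj (hB : B ∈ N.nontrivialBlocks) (hv : v ∈ B) :
    2 ≤ (B ∩ {w | UAdj N.arcs v w}).ncard :=
  have := N.vfin
  hB.1.1.two_le_ncard_inter_uAdj hB.2 hv (N.not_uAdj_self v)

theorem exists_mem_nontrivialBlocks {S : Set V} (hS : Biconnected N.arcs S) (hx : x ∈ S)
    (hy : y ∈ S) (hw : w ∈ S) (hxy : x ≠ y) (hxw : x ≠ w) (hyw : y ≠ w) :
    ∃ B ∈ N.nontrivialBlocks, S ⊆ B := by
  have := N.vfin
  obtain ⟨B, hB, hSB⟩ := hS.exists_biconnComp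
  exact ⟨B, ⟨hB, (Set.two_lt_ncard_iff).2 ⟨x, y, w, hSB hx, hSB hy, hSB hw, hxy, hxw, hyw⟩⟩, hSB⟩

theorem exists_mem_nontrivialBlocks_of_isRetic (hv : IsRetic N.arcs v) :
    ∃ B ∈ N.nontrivialBlocks, v ∈ B := by
  have := N.vfin
  obtain ⟨u₁, u₂, hu, hpar⟩ := Set.ncard_eq_two.1 hv.1
  have h₁ : (u₁, v) ∈ N.arcs := (hpar ▸ Set.mem_insert _ _ : u₁ ∈ {u | (u, v) ∈ N.arcs})
  have h₂ : (u₂, v) ∈ N.arcs := (hpar ▸ Set.mem_insert_of_mem _ rfl : u₂ ∈ {u | (u, v) ∈ N.arcs})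
  obtain ⟨rt, hrt⟩ := N.root_ex
  obtain ⟨S, hS, hvS, h₁S, h₂S⟩ := exists_biconnected_of_reflTransGen (fun _ _ h => Or.inl h)
    N.acyclic (N.reaches_of_isRoot hrt u₁) (N.reaches_of_isRoot hrt u₂) h₁ h₂
  obtain ⟨B, hB, hSB⟩ := N.exists_mem_nontrivialBlocks hS hvS h₁S h₂S
    (fun h => N.acyclic.irrefl v (h ▸ h₁)) (fun h => N.acyclic.irrefl v (h ▸ h₂)) hu
  exact ⟨B, hB, hSB hvS⟩

theorem exists_mem_nontrivialBlocks_of_reaches (h₁ : (v, x) ∈ N.arcs) (h₂ : (v, y) ∈ N.arcs)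
    (hxy : x ≠ y) (hx : Reaches N.arcs x w) (hy : Reaches N.arcs y w) :
    ∃ B ∈ N.nontrivialBlocks, v ∈ B ∧ x ∈ B := by
  have := N.vfin
  obtain ⟨S, hS, hvS, hxS, hyS⟩ := exists_biconnected_of_reflTransGen
    (r := fun a b => (b, a) ∈ N.arcs) (fun _ _ h => Or.inr h) (fun _ _ h h' => N.acyclic _ _ h (reflTransGen_swap.1 h'))
    (reflTransGen_swap.2 hx) (reflTransGen_swap.2 hy) h₁ h₂
  obtain ⟨B, hB, hSB⟩ := N.exists_mem_nontrivialBlocks hS hvS hxS hyS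
    (fun h => N.acyclic.irrefl v (h ▸ h₁)) (fun h => N.acyclic.irrefl v (h ▸ h₂)) hxy
  exact ⟨B, hB, hSB hvS, hSB hxS⟩

theorem disjoint_of_mem_nontrivialBlocks (hB : B ∈ N.nontrivialBlocks)
    (hB' : B' ∈ N.nontrivialBlocks) (hne : B ≠ B') : Disjoint B B' := by
  have := N.vfin
  refine Set.disjoint_left.2 fun u hu hu' => ?_
  have h₁ := N.two_le_ncard_inter_uAdj hB hu
  have h₂ := N.two_le_ncard_inter_uAdj hB' hu'
  set nbrs := {w | UAdj N.arcs u w}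
  have hnbrs : Disjoint (B ∩ nbrs) (B' ∩ nbrs) := by
    refine Set.disjoint_left.2 fun w hw hw' => hne ?_
    exact hB.1.eq_of_mem_of_mem hB'.1 ⟨hw.1, hw'.1⟩ ⟨hu, hu'⟩
      (by rintro rfl; exact N.not_uAdj_self _ hw.2)
  have : (B ∩ nbrs).ncard + (B' ∩ nbrs).ncard ≤ 3 := calc
    _ = (B ∩ nbrs ∪ B' ∩ nbrs).ncard := (Set.ncard_union_eq hnbrs).symm
    _ ≤ 3 := (Set.ncard_le_ncard (Set.union_subset Set.inter_subset_right
      Set.inter_subset_right)).trans (N.ncard_uAdj_le_three u)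
  omega

theorem not_mem_of_isLeafV (hv : IsLeafV N.arcs v) (hB : B ∈ N.nontrivialBlocks) : v ∉ B := by
  have := N.vfin
  intro hvB
  have := Set.ncard_le_ncard (Set.inter_subset_right (s := B) (t := {w | UAdj N.arcs v w}))
  have := (ncard_uAdj_le (A := N.arcs) v).trans_eq (by rw [hv.1, hv.2])
  have := N.two_le_ncard_inter_uAdj hB hvB
  omega

def descendants (v : V) : Set V := {w | Reaches N.arcs v w}

def exits (B : Set V) : Set V := {x | x ∉ B ∧ ∃ u ∈ B, (u, x) ∈ N.arcs}

theorem three_le_ncard_exits (hB : B ∈ N.nontrivialBlocks) : 3 ≤ (N.exits B).ncard := by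
  have := N.vfin
  refine (N.bicomp_out B hB.1 (by have := hB.2; omega)).trans
    (Set.ncard_le_ncard_of_injOn Prod.snd (fun a ⟨ha, hu, hx⟩ => ⟨hx, a.1, hu, ha⟩) ?_)
  rintro ⟨u₁, x⟩ ⟨h₁, hu₁, hx⟩ ⟨u₂, _⟩ ⟨h₂, hu₂, -⟩ (rfl : x = _)
  by_contra hne
  exact hx (hB.1.mem_of_uAdj (fun h : u₁ = u₂ => hne (h ▸ rfl)) hu₁ hu₂ (Or.inr h₁) (Or.inr h₂))

theorem disjoint_descendants_of_mem_exits (hB : BiconnComp N.arcs B) (hx : x ∈ N.exits B) :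
    Disjoint (N.descendants x) B := by
  have := N.vfin
  obtain ⟨hxB, u, hu, hux⟩ := hx
  refine Set.disjoint_left.2 fun w hxw hw => hxB ?_
  obtain ⟨S, hS⟩ := SimplePath.exists_of_reflTransGen hxw
  have huS : u ∉ S := fun huS => N.acyclic u x hux (hS.reflTransGen_of_mem huS).1
  have hpath : SimplePath (UAdj N.arcs) u w (insert u S) :=
    .cons (Or.inl hux) (hS.mono fun _ _ h => Or.inl h) huS
  exact hB.subset_of_simplePath hpath hu hw (Set.mem_insert_of_mem _ hS.head_mem)

theorem exists_mem_exits_of_reaches (h : Reaches N.arcs u w) (hu : u ∈ B) (hw : w ∉ B) :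
    ∃ x ∈ N.exits B, Reaches N.arcs u x ∧ w ∈ N.descendants x := by
  induction h using ReflTransGen.head_induction_on with
  | refl => exact absurd hu hw
  | @head a c hac hcw ih =>
    by_cases hc : c ∈ B
    · obtain ⟨x, hx, hcx, hxw⟩ := ih hc
      exact ⟨x, hx, .head hac hcx, hxw⟩
    · exact ⟨c, ⟨hc, a, hu, hac⟩, .single hac, hcw⟩

/-- If the regions below two exits met, the arcs into the exits would close either a second block
through their common tail or a path outside the block between two of its vertices. -/
theorem disjoint_descendants_exits (hB : B ∈ N.nontrivialBlocks) (hx : x ∈ N.exits B)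
    (hy : y ∈ N.exits B) (hxy : x ≠ y) : Disjoint (N.descendants x) (N.descendants y) := by
  have := N.vfin
  obtain ⟨hxB, u₁, hu₁, h₁⟩ := id hx
  obtain ⟨-, u₂, hu₂, h₂⟩ := id hy
  refine Set.disjoint_left.2 fun z hzx hzy => ?_
  by_cases hu : u₁ = u₂
  · subst hu
    obtain ⟨B', hB', hu₁B', hxB'⟩ :=
      N.exists_mem_nontrivialBlocks_of_reaches h₁ h₂ hxy hzx hzy
    obtain rfl : B' = B := by
      by_contra hne
      exact Set.disjoint_left.1 (N.disjoint_of_mem_nontrivialBlocks hB' hB hne) hu₁B' hu₁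
    exact hxB hxB'
  have hout : ∀ t, Reaches N.arcs x t ∨ Reaches N.arcs y t → t ≠ u₁ ∧ t ≠ u₂ := fun t ht => by
    have htB : t ∉ B := ht.elim (fun h => Set.disjoint_left.1
      (N.disjoint_descendants_of_mem_exits hB.1 hx) h) (fun h => Set.disjoint_left.1
      (N.disjoint_descendants_of_mem_exits hB.1 hy) h)
    exact ⟨fun h => htB (h ▸ hu₁), fun h => htB (h ▸ hu₂)⟩
  obtain ⟨S, hS, hxS⟩ := exists_simplePath_of_reaches h₁ h₂ hu hzx hzy hout
  exact hxB (hB.1.subset_of_simplePath hS hu₁ hu₂ hxS)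

theorem disjoint_descendants_children (hv : ∀ B ∈ N.nontrivialBlocks, v ∉ B)
    (hx : (v, x) ∈ N.arcs) (hy : (v, y) ∈ N.arcs) (hxy : x ≠ y) :
    Disjoint (N.descendants x) (N.descendants y) := by
  refine Set.disjoint_left.2 fun z hzx hzy => ?_
  obtain ⟨B, hB, hvB, -⟩ := N.exists_mem_nontrivialBlocks_of_reaches hx hy hxy hzx hzy
  exact hv B hB hvB

theorem exists_subset_descendants {H : Set V} (hH : H.PairwiseDisjoint N.descendants)
    {S : Set V} (hS : ConnWithin N.arcs S) (hSH : S ⊆ ⋃ x ∈ H, N.descendants x)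
    (hne : S.Nonempty) : ∃ x ∈ H, S ⊆ N.descendants x := by
  obtain ⟨w₀, hw₀⟩ := hne
  obtain ⟨x₀, hx₀, hw₀x₀⟩ := Set.mem_iUnion₂.1 (hSH hw₀)
  refine ⟨x₀, hx₀, fun w hw => ?_⟩
  induction hS.joinedIn hw₀ hw with
  | refl => exact hw₀x₀
  | @tail b c _ hbc ih =>
    rcases hbc.2.2 with hbc' | hcb
    · exact (ih hbc.1).tail hbc'
    -- an arc `(c, b)` into the region of `x₀` puts `b` also in the region of `c`
    obtain ⟨x, hx, hcx⟩ := Set.mem_iUnion₂.1 (hSH hbc.2.1)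
    obtain rfl := hH.elim_set hx hx₀ b (hcx.tail hcb) (ih hbc.1)
    exact hcx

def leavesBelow (v : V) : Set V := {w ∈ N.descendants v | IsLeafV N.arcs w}

def blocksBelow (v : V) : Set (Set V) := {B ∈ N.nontrivialBlocks | B ⊆ N.descendants v}

theorem mem_biUnion_blocksBelow {H : Set V} (hH : H.PairwiseDisjoint N.descendants)
    (hB : B ∈ N.nontrivialBlocks) (hBH : B ⊆ ⋃ x ∈ H, N.descendants x) :
    B ∈ ⋃ x ∈ H, N.blocksBelow x := by
  have hne : B.Nonempty := Set.nonempty_of_ncard_ne_zero (by have := hB.2; omega)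
  obtain ⟨x, hx, hBx⟩ := N.exists_subset_descendants hH hB.1.1.2.1 hBH hne
  exact Set.mem_iUnion₂.2 ⟨x, hx, hB, hBx⟩

theorem ncard_blocksBelow_add_one_le_of_cover {v : V} {H : Set V} {E : Set (Set V)}
    (hHv : ∀ x ∈ H, Reaches N.arcs v x) (hH : H.PairwiseDisjoint N.descendants)
    (ih : ∀ x ∈ H, (N.blocksBelow x).ncard + 1 ≤ (N.leavesBelow x).ncard)
    (hcov : N.blocksBelow v ⊆ E ∪ ⋃ x ∈ H, N.blocksBelow x) (hE : E.ncard < H.ncard) :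
    (N.blocksBelow v).ncard + 1 ≤ (N.leavesBelow v).ncard := by
  have := N.vfin
  obtain ⟨H, rfl⟩ := (Set.toFinite H).exists_finset_coe
  rw [Set.ncard_coe_finset] at hE
  have hblocks : (N.blocksBelow v).ncard ≤ E.ncard + ∑ x ∈ H, (N.blocksBelow x).ncard :=
    (Set.ncard_le_ncard hcov).trans ((Set.ncard_union_le _ _).trans
      (Nat.add_le_add_left (H.set_ncard_biUnion_le _) _))
  have hleaves : ∑ x ∈ H, (N.leavesBelow x).ncard ≤ (N.leavesBelow v).ncard := by
    rw [← finsum_mem_coe_finset, ← (Set.toFinite _).ncard_biUnion (fun _ _ => Set.toFinite _)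
      (hH.mono_on (g := N.leavesBelow) fun _ _ => Set.sep_subset _ _)]
    refine Set.ncard_le_ncard (Set.iUnion₂_subset fun x hx w hw => ⟨?_, hw.2⟩)
    exact (hHv x hx).trans hw.1
  have hih : ∑ x ∈ H, ((N.blocksBelow x).ncard + 1) ≤ ∑ x ∈ H, (N.leavesBelow x).ncard :=
    Finset.sum_le_sum ih
  rw [Finset.sum_add_distrib, Finset.sum_const, smul_eq_mul, mul_one] at hih
  omega

theorem ncard_blocksBelow_add_one_le_of_isLeafV (hv : IsLeafV N.arcs v) :
    (N.blocksBelow v).ncard + 1 ≤ (N.leavesBelow v).ncard := by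
  have := N.vfin
  have hdesc : N.descendants v = {v} := by
    refine Set.eq_singleton_iff_unique_mem.2 ⟨.refl, fun w hw => ?_⟩
    obtain rfl | ⟨c, hc, -⟩ := hw.cases_head
    · rfl
    · exact absurd hc (outdeg_eq_zero_iff.1 hv.2 c)
  have hblocks : N.blocksBelow v = ∅ := by
    refine Set.eq_empty_of_forall_notMem fun B ⟨hB, hBv⟩ => ?_
    have := (Set.ncard_le_ncard (hdesc ▸ hBv)).trans (Set.ncard_singleton v).le
    have := hB.2
    omega
  rw [hblocks, Set.ncard_empty, zero_add, Nat.one_le_iff_ne_zero]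
  exact Set.ncard_ne_zero_of_mem (⟨.refl, hv⟩ : v ∈ N.leavesBelow v)

theorem ncard_blocksBelow_add_one_le_of_mem (hB : B ∈ N.nontrivialBlocks) (hvB : v ∈ B)
    (ih : ∀ x, TransGen (fun a b => (a, b) ∈ N.arcs) v x →
      (N.blocksBelow x).ncard + 1 ≤ (N.leavesBelow x).ncard) :
    (N.blocksBelow v).ncard + 1 ≤ (N.leavesBelow v).ncard := by
  have := N.vfin
  set X := {x ∈ N.exits B | Reaches N.arcs v x}
  have hX : X.PairwiseDisjoint N.descendants := fun x hx y hy hxy =>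
    N.disjoint_descendants_exits hB hx.1 hy.1 hxy
  refine N.ncard_blocksBelow_add_one_le_of_cover (E := {B} ∩ N.blocksBelow v)
    (fun x hx => hx.2) hX (fun x ⟨⟨hxB, _⟩, hvx⟩ => ih x ?_) (fun B' hB' => ?_) ?_
  · exact (reflTransGen_iff_eq_or_transGen.1 hvx).resolve_left fun h => hxB (h ▸ hvB)
  · by_cases hB'B : B' = B
    · exact .inl ⟨hB'B, hB'⟩
    refine .inr (N.mem_biUnion_blocksBelow hX hB'.1 fun w hw => ?_)
    have hwB := Set.disjoint_left.1 (N.disjoint_of_mem_nontrivialBlocks hB'.1 hB hB'B) hw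
    obtain ⟨x, hx, hvx, hxw⟩ := N.exists_mem_exits_of_reaches (hB'.2 hw) hvB hwB
    exact Set.mem_iUnion₂.2 ⟨x, ⟨hx, hvx⟩, hxw⟩
  by_cases hBv : B ∈ N.blocksBelow v
  · have hXexits : X = N.exits B := Set.sep_eq_self_iff_mem_true.2 fun x ⟨_, u, hu, hux⟩ =>
      (hBv.2 hu).tail hux
    rw [hXexits]
    have := (Set.ncard_le_ncard (Set.inter_subset_left (s := {B}) (t := N.blocksBelow v))).trans
      (Set.ncard_singleton B).le
    have := N.three_le_ncard_exits hB
    omega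
  · rw [Set.singleton_inter_eq_empty.2 hBv, Set.ncard_empty, Set.ncard_pos]
    obtain ⟨w, hw, hvw⟩ := N.exists_isLeafV_reaches v
    obtain ⟨x, hx, hvx, -⟩ := N.exists_mem_exits_of_reaches hvw hvB (N.not_mem_of_isLeafV hw hB)
    exact ⟨x, hx, hvx⟩

theorem ncard_blocksBelow_add_one_le_of_forall_not_mem (hv : ∀ B ∈ N.nontrivialBlocks, v ∉ B)
    (hleaf : ¬ IsLeafV N.arcs v)
    (ih : ∀ x, TransGen (fun a b => (a, b) ∈ N.arcs) v x →
      (N.blocksBelow x).ncard + 1 ≤ (N.leavesBelow x).ncard) :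
    (N.blocksBelow v).ncard + 1 ≤ (N.leavesBelow v).ncard := by
  have := N.vfin
  have hC : {x | (v, x) ∈ N.arcs}.PairwiseDisjoint N.descendants := fun x hx y hy hxy =>
    N.disjoint_descendants_children hv hx hy hxy
  refine N.ncard_blocksBelow_add_one_le_of_cover (E := ∅) (fun x hx => .single hx) hC
    (fun x hx => ih x (.single hx)) (fun B hB => .inr ?_) ?_
  · refine N.mem_biUnion_blocksBelow hC hB.1 fun w hw => ?_
    obtain rfl | ⟨x, hvx, hxw⟩ := (hB.2 hw).cases_head
    · exact absurd hw (hv B hB.1)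
    · exact Set.mem_iUnion₂.2 ⟨x, hvx, hxw⟩
  · rw [Set.ncard_empty]
    exact Nat.pos_of_ne_zero fun h => hleaf (N.isLeafV_of_outdeg_eq_zero h)

theorem ncard_blocksBelow_add_one_le (v : V) :
    (N.blocksBelow v).ncard + 1 ≤ (N.leavesBelow v).ncard := by
  have := N.vfin
  induction v using N.acyclic.wellFounded_descendant.induction with
  | _ v ih =>
  by_cases hleaf : IsLeafV N.arcs v
  · exact N.ncard_blocksBelow_add_one_le_of_isLeafV hleaf
  by_cases hvB : ∀ B ∈ N.nontrivialBlocks, v ∉ B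
  · exact N.ncard_blocksBelow_add_one_le_of_forall_not_mem hvB hleaf ih
  simp only [not_forall, not_not] at hvB
  obtain ⟨B, hB, hvB⟩ := hvB
  exact N.ncard_blocksBelow_add_one_le_of_mem hB hvB ih

theorem ncard_nontrivialBlocks_add_one_le :
    N.nontrivialBlocks.ncard + 1 ≤ {v | IsLeafV N.arcs v}.ncard := by
  obtain ⟨rt, hrt⟩ := N.root_ex
  have hall : ∀ w, w ∈ N.descendants rt := N.reaches_of_isRoot hrt
  have hblocks : N.blocksBelow rt = N.nontrivialBlocks :=
    Set.sep_eq_self_iff_mem_true.2 fun _ _ w _ => hall w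
  have hleaves : N.leavesBelow rt = {v | IsLeafV N.arcs v} := by simp [leavesBelow, hall]
  simpa [hblocks, hleaves] using N.ncard_blocksBelow_add_one_le rt

theorem numRetic_le_mul_ncard_nontrivialBlocks {k : ℕ} (hlev : IsLevel N k) :
    numRetic N ≤ k * N.nontrivialBlocks.ncard := by
  have := N.vfin
  set Bs := (Set.toFinite N.nontrivialBlocks).toFinset
  have hcov : {v | IsRetic N.arcs v} ⊆ ⋃ B ∈ Bs, {v ∈ B | IsRetic N.arcs v} := fun v hv => by
    obtain ⟨B, hB, hvB⟩ := N.exists_mem_nontrivialBlocks_of_isRetic hv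
    exact Set.mem_iUnion₂.2 ⟨B, (Set.Finite.mem_toFinset _).2 hB, hvB, hv⟩
  calc numRetic N ≤ ∑ B ∈ Bs, {v ∈ B | IsRetic N.arcs v}.ncard :=
        (Set.ncard_le_ncard hcov).trans (Bs.set_ncard_biUnion_le _)
    _ ≤ Bs.card * k :=
        Finset.sum_le_card_nsmul _ _ _ fun B hB => hlev B ((Set.Finite.mem_toFinset _).1 hB).1
    _ = k * N.nontrivialBlocks.ncard := by rw [mul_comm, Set.ncard_eq_toFinset_card]

theorem natCard_add_numRetic : Nat.card V + numRetic N = N.arcs.ncard + 1 := by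
  classical
  have := N.vfin
  have := Fintype.ofFinite V
  obtain ⟨rt, hrt⟩ := N.root_ex
  have hroot : {v | IsRoot N.arcs v}.ncard = 1 := Set.ncard_eq_one.2
    ⟨rt, Set.eq_singleton_iff_unique_mem.2 ⟨hrt, fun v hv => N.root_unique v rt hv hrt⟩⟩
  have hv (v : V) : indeg N.arcs v + (if IsRoot N.arcs v then 1 else 0) =
      1 + (if IsRetic N.arcs v then 1 else 0) := by
    rcases N.vertex_type v with ⟨h₁, h₂⟩ | ⟨h₁, h₂⟩ | ⟨h₁, h₂⟩ | ⟨h₁, h₂⟩ <;>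
      simp [IsRoot, IsRetic, h₁, h₂]
  have hsum := Finset.sum_congr rfl fun v (_ : v ∈ Finset.univ) => hv v
  rw [Finset.sum_add_distrib, Finset.sum_add_distrib, ← ncard_eq_sum_indeg, sum_ite_eq_ncard,
    sum_ite_eq_ncard, hroot, Finset.sum_const, Finset.card_univ, smul_eq_mul, mul_one] at hsum
  rw [Nat.card_eq_fintype_card, numRetic, ← hsum]

theorem two_mul_natCard :
    2 * Nat.card V = N.arcs.ncard + 2 * {v | IsLeafV N.arcs v}.ncard + numRetic N := by
  classical
  have := N.vfin
  have := Fintype.ofFinite V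
  have hv (v : V) : outdeg N.arcs v + 2 * (if IsLeafV N.arcs v then 1 else 0) +
      (if IsRetic N.arcs v then 1 else 0) = 2 := by
    rcases N.vertex_type v with ⟨h₁, h₂⟩ | ⟨h₁, h₂⟩ | ⟨h₁, h₂⟩ | ⟨h₁, h₂⟩ <;>
      simp [IsLeafV, IsRetic, h₁, h₂]
  have hsum := Finset.sum_congr rfl fun v (_ : v ∈ Finset.univ) => hv v
  rw [Finset.sum_add_distrib, Finset.sum_add_distrib, ← Finset.mul_sum, ← ncard_eq_sum_outdeg,
    sum_ite_eq_ncard, sum_ite_eq_ncard, Finset.sum_const, Finset.card_univ, smul_eq_mul] at hsum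
  rw [Nat.card_eq_fintype_card, numRetic, hsum, mul_comm]

end PhyloNetwork

theorem levelk_network_size_bound_general (V L : Type) (N : PhyloNetwork V L) (k n : ℕ)
    (hlev : IsLevel N k)
    (hn : {v : V | IsLeafV N.arcs v}.ncard = n) :
    (Nat.card V : ℚ) ≤ n + (n - 1) * (3 * k - 1) + (2 * n - 2) ∧
    (N.arcs.ncard : ℚ) ≤ (2 * n - 2) + (n - 1) * (9 * k - 3) / 2 + (2 * n - 2) := by
  have hV := N.natCard_add_numRetic
  have hA := N.two_mul_natCard
  have hb := N.ncard_nontrivialBlocks_add_one_le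
  rw [hn] at hA hb
  have hr : numRetic N ≤ k * (n - 1) :=
    (N.numRetic_le_mul_ncard_nontrivialBlocks hlev).trans (Nat.mul_le_mul_left k (by omega))
  have hrq : (numRetic N : ℚ) ≤ k * (n - 1) := by
    rw [← Nat.cast_one, ← Nat.cast_sub (by omega : 1 ≤ n)]
    exact_mod_cast hr
  have hkn : (0 : ℚ) ≤ k * (n - 1) :=
    mul_nonneg k.cast_nonneg (sub_nonneg.2 (by exact_mod_cast (by omega : 1 ≤ n)))
  have hVq : (Nat.card V : ℚ) + numRetic N = N.arcs.ncard + 1 := by exact_mod_cast hV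
  have hAq : 2 * (Nat.card V : ℚ) = N.arcs.ncard + 2 * n + numRetic N := by exact_mod_cast hA
  constructor <;> linarith

/-- A level-`k` phylogenetic network with `n` leaves has at most
`n + (n-1)(3k-1) + (2n-2)` vertices and at most `(2n-2) + (n-1)(9k-3)/2 + (2n-2)` arcs
(in particular, `O(n)` vertices and arcs). -/
theorem levelk_network_size_bound (V L : Type) (N : PhyloNetwork V L) (k n : ℕ)
    (hk : 1 ≤ k) (hlev : IsLevel N k)
    (hn : {v : V | IsLeafV N.arcs v}.ncard = n) :
    (Nat.card V : ℚ) ≤ n + (n - 1) * (3 * k - 1) + (2 * n - 2) ∧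
    (N.arcs.ncard : ℚ) ≤ (2 * n - 2) + (n - 1) * (9 * k - 3) / 2 + (2 * n - 2) :=
  levelk_network_size_bound_general V L N k n hlev hn

end Phylo
end

section
/- Let N be a simple network, i.e. a phylogenetic network that contains at least one reticulation vertex and in which every cut-arc is trivial. Then every TBR of N consists of a single leaf; that is, if v is the child of a reticulation vertex of N and no reticulation vertex of N is reachable from v, then v is a leaf. -/
/-!
Common definitions for formalizing "Constructing the Simplest Possible
Phylogenetic Network from Triplets" (van Iersel, Kelk).

A directed graph on a vertex type `V` is given by its arc set `A : Set (V × V)`.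
-/

namespace Phylo

variable {V L : Type}

/-- In a simple network every TBR is a single leaf: if `v` is the
child of a reticulation vertex and no reticulation vertex is reachable from `v`,
then `v` is a leaf. -/
theorem simple_TBR_is_leaf (V L : Type) (N : PhyloNetwork V L)
    (hsimple : SimpleNet N) (r v : V)
    (hr : IsRetic N.arcs r) (harc : (r, v) ∈ N.arcs)
    (hnoretic : ∀ w, Reaches N.arcs v w → ¬ IsRetic N.arcs w) :
    IsLeafV N.arcs v := by
  have _ := N.vfin
  set A := N.arcs with hA
  -- every vertex reachable from v that has an in-arc has indegree 1
  have indeg_one : ∀ w, Reaches A v w → ∀ u, (u, w) ∈ A → indeg A w = 1 := by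
    intro w hw u hu
    have hwnr : ¬ IsRetic A w := hnoretic w hw
    rcases N.vertex_type w with h | h | h | h
    · exfalso
      have h0 : ({x | (x, w) ∈ A} : Set V) = ∅ :=
        (Set.ncard_eq_zero (Set.toFinite _)).mp h.1
      have : u ∈ ({x | (x, w) ∈ A} : Set V) := hu
      rw [h0] at this
      exact this
    · exact h.1
    · exact absurd h hwnr
    · exact h.1
  -- uniqueness of in-neighbours for indegree-1 vertices
  have uniq : ∀ w u u', indeg A w = 1 → (u, w) ∈ A → (u', w) ∈ A → u = u' := by
    intro w u u' h1 hu hu'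
    obtain ⟨x, hx⟩ := Set.ncard_eq_one.mp h1
    have h1' : u ∈ ({x} : Set V) := hx ▸ (hu : u ∈ {y | (y, w) ∈ A})
    have h2' : u' ∈ ({x} : Set V) := hx ▸ (hu' : u' ∈ {y | (y, w) ∈ A})
    simp only [Set.mem_singleton_iff] at h1' h2'
    rw [h1', h2']
  -- closure: undirected reachability after removing (r,v) stays below v
  have clo : ∀ w, Relation.ReflTransGen (UAdj (A \ {(r, v)})) v w → Reaches A v w := by
    intro w hw
    induction hw with
    | refl => exact Relation.ReflTransGen.refl
    | @tail b c hb hadj ih =>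
      rcases hadj with h | h
      · exact ih.tail h.1
      · have hcb : (c, b) ∈ A := h.1
        have hne : (c, b) ≠ (r, v) := by
          intro heq; exact h.2 (by simp [heq])
        have h1 : indeg A b = 1 := indeg_one b ih c hcb
        by_cases hbv : b = v
        · have hrb : (r, b) ∈ A := by rw [hbv]; exact harc
          have hcr : c = r := uniq b c r h1 hcb hrb
          exact absurd (by rw [hcr, hbv]) hne
        · rcases ih.cases_tail with h' | ⟨x, hx1, hx2⟩
          · exact absurd h' hbv
          · have hcx : c = x := uniq b c x h1 hcb hx2
            rw [hcx]; exact hx1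
  have hcut : CutArc A (r, v) := by
    refine ⟨harc, fun hconn => ?_⟩
    exact hnoretic r (clo r (hconn v r)) hr
  exact hsimple.2 (r, v) hcut

end Phylo
end

section
/- Let N be a phylogenetic network consistent with a triplet set T with L(T) = L(N), and let (u,v) be a cut-arc of N. Then the set S of leaves of N below (u,v) is an SN-set of T; that is, there is no triplet xy|z ∈ T with x,z ∈ S and y ∉ S. -/
/-!
Common definitions for formalizing "Constructing the Simplest Possible
Phylogenetic Network from Triplets" (van Iersel, Kelk).

A directed graph on a vertex type `V` is given by its arc set `A : Set (V × V)`.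
-/

namespace Phylo

variable {V L : Type}

/-!
Let `v` be the head of the cut-arc. Deleting the cut-arc splits the network into exactly two
components: the vertices below `v` and the vertices that the root reaches without passing `v`.
In an embedding of `xy|z` with `x, z` below `v` and `y` not, the summit and the cherry vertex
reach `y`, so they lie on the root's side; hence both the path to `x` and the path to `z` must
pass through `v`. Internal disjointness forces `v` to be an endpoint of both, i.e. `v = x = z`.
-/

lemma _root_.List.IsChain.reflTransGen_of_head?_of_getLast? {α : Type*} {R : α → α → Prop}
    {l : List α} {s t : α} (hl : l.IsChain R) (hs : l.head? = some s)
    (ht : l.getLast? = some t) : Relation.ReflTransGen R s t := by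
  cases l with
  | nil => simp at hs
  | cons x l =>
    obtain rfl : x = s := by simpa using hs
    exact List.relationReflTransGen_of_exists_isChain_cons l hl
      (by simpa [List.getLast?_eq_some_getLast] using ht)

section Graph

variable {V : Type} {A : Set (V × V)}

instance : Std.Symm (UAdj A) := ⟨fun _ _ h => h.symm⟩

lemma Reaches.uadj {s t : V} (h : Reaches A s t) : Relation.ReflTransGen (UAdj A) s t :=
  Relation.ReflTransGen.mono (fun _ _ => Or.inl) _ _ h

lemma IsPathFromTo.reaches {l : List V} {s t : V} (h : IsPathFromTo A l s t) : Reaches A s t :=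
  h.1.2.2.reflTransGen_of_head?_of_getLast? h.2.1 h.2.2

lemma IsPathFromTo.eq_or_eq_of_isEndpoint {l : List V} {s t w : V} (h : IsPathFromTo A l s t)
    (hw : IsEndpoint l w) : w = s ∨ w = t := by
  rw [IsEndpoint, h.2.1, h.2.2, Option.some_inj, Option.some_inj] at hw
  exact hw.imp Eq.symm Eq.symm

lemma IsPathFromTo.reaches_diff_of_not_mem {l : List V} {s t : V} (h : IsPathFromTo A l s t)
    {e : V × V} (he : e.2 ∉ l) : Reaches (A \ {e}) s t := by
  refine List.IsChain.reflTransGen_of_head?_of_getLast? ?_ h.2.1 h.2.2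
  refine h.1.2.2.imp_of_mem_imp fun a b _ hb hab => ⟨hab, ?_⟩
  rintro rfl
  exact he hb

lemma Reaches.diff_or_through {s t : V} (h : Reaches A s t) (e : V × V) :
    Reaches (A \ {e}) s t ∨ (Reaches A s e.1 ∧ Reaches A e.2 t) := by
  induction h with
  | refl => exact Or.inl .refl
  | @tail m t' hsm harc ih =>
    by_cases he : (m, t') = e
    · subst he
      exact Or.inr ⟨hsm, .refl⟩
    · exact ih.imp (fun h => h.tail ⟨harc, he⟩) fun h => ⟨h.1, h.2.tail harc⟩

lemma Acyclic.wellFounded [Finite V] (h : Acyclic A) : WellFounded fun u v => (u, v) ∈ A := by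
  have : Std.Irrefl (Relation.TransGen fun u v => (u, v) ∈ A) :=
    ⟨fun v hv => by
      obtain ⟨u, hvu, huv⟩ := Relation.TransGen.tail'_iff.1 hv
      exact h u v huv hvu⟩
  exact Subrelation.wf (fun h => Relation.TransGen.single h)
    (Finite.wellFounded_of_trans_of_irrefl (Relation.TransGen fun u v => (u, v) ∈ A))

end Graph

namespace PhyloNetwork

variable {V L : Type} (N : PhyloNetwork V L)

lemma exists_parent {v : V} (hv : ¬ IsRoot N.arcs v) : ∃ u, (u, v) ∈ N.arcs := by
  have hpos : indeg N.arcs v ≠ 0 := by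
    rcases N.vertex_type v with h | h | h | h
    · exact absurd h hv
    all_goals rw [h.1]; omega
  exact Set.nonempty_of_ncard_ne_zero hpos

lemma root_reaches {r : V} (hr : IsRoot N.arcs r) (w : V) : Reaches N.arcs r w := by
  have := N.vfin
  induction w using N.acyclic.wellFounded.induction with
  | _ w ih =>
    by_cases hw : IsRoot N.arcs w
    · rw [N.root_unique r w hr hw]
      exact .refl
    · obtain ⟨u, hu⟩ := N.exists_parent hw
      exact (ih u hu).tail hu

lemma root_uadj_diff_iff_not_reaches {r : V} (hr : IsRoot N.arcs r) {e : V × V}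
    (he : CutArc N.arcs e) (w : V) :
    Relation.ReflTransGen (UAdj (N.arcs \ {e})) r w ↔ ¬ Reaches N.arcs e.2 w := by
  have above : ∀ {w}, ¬ Reaches N.arcs e.2 w →
      Relation.ReflTransGen (UAdj (N.arcs \ {e})) r w :=
    fun hw => (((N.root_reaches hr _).diff_or_through e).resolve_right fun h => hw h.2).uadj
  have below : ∀ {w}, Reaches N.arcs e.2 w →
      Relation.ReflTransGen (UAdj (N.arcs \ {e})) e.2 w :=
    fun hw => ((hw.diff_or_through e).resolve_right fun h => N.acyclic e.1 e.2 he.1 h.1).uadj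
  refine ⟨fun hrw hw => he.2 fun s t => ?_, above⟩
  have hre : Relation.ReflTransGen (UAdj (N.arcs \ {e})) r e.2 := hrw.trans (symm (below hw))
  have hall : ∀ s, Relation.ReflTransGen (UAdj (N.arcs \ {e})) r s := fun s =>
    (em (Reaches N.arcs e.2 s)).elim (fun hs => hre.trans (below hs)) above
  exact (symm (hall s)).trans (hall t)

lemma snd_mem_of_isPathFromTo {e : V × V} (he : CutArc N.arcs e) {l : List V} {s t : V}
    (hl : IsPathFromTo N.arcs l s t) (hs : ¬ Reaches N.arcs e.2 s) (ht : Reaches N.arcs e.2 t) :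
    e.2 ∈ l := by
  by_contra hl'
  obtain ⟨r, hr⟩ := N.root_ex
  have hrs := (N.root_uadj_diff_iff_not_reaches hr he s).2 hs
  exact (N.root_uadj_diff_iff_not_reaches hr he t).1
    (hrs.trans (hl.reaches_diff_of_not_mem hl').uadj) ht

end PhyloNetwork

/-- If a network `N` is consistent with a triplet set `T` (with
`L(T) = L(N)`) then the set of leaves below any cut-arc of `N` is an SN-set of `T`. -/
theorem leaves_below_cutarc_SNset (V L : Type) (N : PhyloNetwork V L)
    (T : Set (L × L × L)) (hcons : ConsistentSet N T)
    (hleaves : tripletLeaves T = leafSet N)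
    (a : V × V) (hcut : CutArc N.arcs a) :
    SNSet T (leavesBelowV N a.2) := by
  refine ⟨fun x ⟨w, hw, _, hwx⟩ => hleaves ▸ ⟨w, hw, hwx⟩, ?_⟩
  rintro ⟨x, y, z, hT, ⟨vx, hvx, hax, rfl⟩, ⟨vz, hvz, haz, rfl⟩, hy⟩
  obtain ⟨vx', vy, vz', hvx', hvy, hvz', hlx, rfl, hlz, -, hxz, -, p, q, -,
    Pqx, Pqy, Ppq, Ppz, hqx, hqy, hpq, hpz, -, -, hdisj, -, -, -⟩ := hcons _ hT
  obtain rfl := N.lab_inj _ _ hvx' hvx hlx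
  obtain rfl := N.lab_inj _ _ hvz' hvz hlz
  have hay : ¬ Reaches N.arcs a.2 vy := fun h => hy ⟨vy, hvy, h, rfl⟩
  have hq : ¬ Reaches N.arcs a.2 q := fun h => hay (h.trans hqy.reaches)
  have hp : ¬ Reaches N.arcs a.2 p := fun h => hq (h.trans hpq.reaches)
  obtain ⟨hx, hz⟩ := hdisj a.2 (N.snd_mem_of_isPathFromTo hcut hqx hq hax)
    (N.snd_mem_of_isPathFromTo hcut hpz hp haz)
  have hvx_eq := (hqx.eq_or_eq_of_isEndpoint hx).resolve_left fun h => hq (h ▸ .refl)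
  have hvz_eq := (hpz.eq_or_eq_of_isEndpoint hz).resolve_left fun h => hp (h ▸ .refl)
  exact hxz (hvx_eq.symm.trans hvz_eq)

end Phylo
end
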